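/- Let n ∈ ℕ and let q : ℕ → ℍ with constant coefficient q 0 = 0 or q 0 = 1, with derived polynomials f₁, f₂. Suppose η ∈ ℂ is nonreal (Im η ≠ 0) and f₁(η) = f₂(η) = 0 and f₁(conj η) = f₂(conj η) = 0. Then every quaternion conjugate to η is a zero of p; equivalently, every x ∈ ℍ with x.re = η.re and ‖x‖ = |η| satisfies ∑_{m=0}^{n} (q m)·x^m = 0. In particular η determines a spherical zero of p. -/

import Mathlib

noncomputable section

/-- The quaternion `a + b·i` corresponding to the complex number `z = a + b·I`. -/
def cq (z : ℂ) : Quaternion ℝ := ⟨z.re, z.im, 0, 0⟩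

/-- The quaternion imaginary unit `k`. -/
def qk : Quaternion ℝ := ⟨0, 0, 0, 1⟩

/-- Evaluation of the first derived polynomial `f₁(t) = ∑ t₁⁽ᵐ⁾ tᵐ`,
where `q m = t₁⁽ᵐ⁾ + t₂⁽ᵐ⁾·j` and `t₁⁽ᵐ⁾ = (q m).re + (q m).imI·I`. -/
def f1 (n : ℕ) (q : ℕ → Quaternion ℝ) (z : ℂ) : ℂ :=
  ∑ m ∈ Finset.range (n + 1), (⟨(q m).re, (q m).imI⟩ : ℂ) * z ^ m

/-- Evaluation of the second derived polynomial `f₂(t) = ∑ t₂⁽ᵐ⁾ tᵐ`,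
where `t₂⁽ᵐ⁾ = (q m).imJ + (q m).imK·I`. -/
def f2 (n : ℕ) (q : ℕ → Quaternion ℝ) (z : ℂ) : ℂ :=
  ∑ m ∈ Finset.range (n + 1), (⟨(q m).imJ, (q m).imK⟩ : ℂ) * z ^ m

/-- Evaluation of `f̄₁`, obtained from `f₁` by conjugating each coefficient. -/
def f1b (n : ℕ) (q : ℕ → Quaternion ℝ) (z : ℂ) : ℂ :=
  ∑ m ∈ Finset.range (n + 1), (starRingEnd ℂ) (⟨(q m).re, (q m).imI⟩ : ℂ) * z ^ m

/-- Evaluation of `f̄₂`, obtained from `f₂` by conjugating each coefficient. -/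
def f2b (n : ℕ) (q : ℕ → Quaternion ℝ) (z : ℂ) : ℂ :=
  ∑ m ∈ Finset.range (n + 1), (starRingEnd ℂ) (⟨(q m).imJ, (q m).imK⟩ : ℂ) * z ^ m

/-- Evaluation of the discriminant polynomial `p̃ = f₁·f̄₁ + f₂·f̄₂`. -/
def ptilde (n : ℕ) (q : ℕ → Quaternion ℝ) (z : ℂ) : ℂ :=
  f1 n q z * f1b n q z + f2 n q z * f2b n q z

/-! Every `z` with `z.re = Re η` and `‖z‖ = |η|`, in `ℂ` or in `ℍ`, is a root of the real quadratic
`X² - 2 Re η · X + |η|²`; this covers `η`, `conj η` and the quaternions conjugate to `η`.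
Reducing `Xᵐ` modulo it gives real `aₘ, bₘ` with `zᵐ = aₘ z + bₘ` for all these `z`, so that
`fᵢ(z) = Aᵢ z + Bᵢ` and `p(x) = (∑ aₘ qₘ) x + ∑ bₘ qₘ`. Since `fᵢ` vanishes at the two distinct
points `η` and `conj η`, `Aᵢ = Bᵢ = 0`; as `qₘ = t₁⁽ᵐ⁾ + t₂⁽ᵐ⁾ j` and `aₘ, bₘ` are real, this
gives `∑ aₘ qₘ = ∑ bₘ qₘ = 0`. -/

open Polynomial Quaternion

theorem pow_eq_smul_add_of_aeval_eq_zero {R A : Type*} [CommRing R] [Ring A] [Algebra R A]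
    {Q : R[X]} (hQ : Q.Monic) (hdeg : Q.natDegree = 2) {z : A} (hz : aeval z Q = 0) (m : ℕ) :
    z ^ m = (X ^ m %ₘ Q).coeff 1 • z + algebraMap R A ((X ^ m %ₘ Q).coeff 0) := by
  have hQ1 : Q ≠ 1 := by rintro rfl; simp at hdeg
  have hlin : (X ^ m %ₘ Q).natDegree ≤ 1 := by
    have := natDegree_modByMonic_lt (X ^ m) hQ hQ1
    omega
  calc z ^ m = aeval z (X ^ m %ₘ Q) := by rw [aeval_modByMonic_eq_self_of_root hz, aeval_X_pow]
    _ = _ := by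
      rw [eq_X_add_C_of_natDegree_le_one hlin]
      simp [Algebra.smul_def]

theorem sum_mul_pow_eq_of_aeval_eq_zero {R A : Type*} [CommRing R] [Ring A] [Algebra R A]
    {Q : R[X]} (hQ : Q.Monic) (hdeg : Q.natDegree = 2) {z : A} (hz : aeval z Q = 0)
    (s : Finset ℕ) (c : ℕ → A) :
    ∑ m ∈ s, c m * z ^ m =
      (∑ m ∈ s, (X ^ m %ₘ Q).coeff 1 • c m) * z + ∑ m ∈ s, (X ^ m %ₘ Q).coeff 0 • c m := by
  rw [Finset.sum_mul, ← Finset.sum_add_distrib]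
  refine Finset.sum_congr rfl fun m _ => ?_
  rw [pow_eq_smul_add_of_aeval_eq_zero hQ hdeg hz, mul_add, mul_smul_comm, smul_mul_assoc,
    Algebra.smul_def _ (c m), Algebra.commutes]

theorem eq_zero_of_mul_add_eq_zero {K : Type*} [Ring K] [NoZeroDivisors K] {a b z w : K}
    (hzw : z ≠ w) (hz : a * z + b = 0) (hw : a * w + b = 0) : a = 0 ∧ b = 0 := by
  have ha : a * (z - w) = 0 := by
    rw [mul_sub, sub_eq_zero]
    exact add_right_cancel (hz.trans hw.symm)
  obtain rfl := (mul_eq_zero.mp ha).resolve_right (sub_ne_zero.mpr hzw)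
  simpa using hz

def realQuadratic (η : ℂ) : ℝ[X] := X ^ 2 - C (2 * η.re) * X + C (Complex.normSq η)

theorem monic_realQuadratic (η : ℂ) : (realQuadratic η).Monic := by
  unfold realQuadratic
  monicity!

theorem natDegree_realQuadratic (η : ℂ) : (realQuadratic η).natDegree = 2 := by
  unfold realQuadratic
  compute_degree!

theorem aeval_self_realQuadratic (η : ℂ) : aeval η (realQuadratic η) = 0 := by
  apply Complex.ext <;> simp [realQuadratic, Complex.normSq_apply, pow_two] <;> ring

theorem aeval_conj_realQuadratic (η : ℂ) : aeval (starRingEnd ℂ η) (realQuadratic η) = 0 := by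
  rw [← Complex.conjAe_coe, aeval_algHom_apply, aeval_self_realQuadratic, map_zero]

theorem aeval_realQuadratic_of_re_eq_of_norm_eq {x : ℍ} {η : ℂ} (hre : x.re = η.re)
    (hnorm : ‖x‖ = ‖η‖) : aeval x (realQuadratic η) = 0 := by
  have hnormSq : Complex.normSq η = normSq x := by
    rw [normSq_eq_norm_mul_self, hnorm, Complex.normSq_eq_norm_sq, sq]
  rw [realQuadratic, hnormSq, ← hre]
  ext <;> simp [pow_two, normSq_def', coe_mul_eq_smul] <;> ring

def qj : ℍ := ⟨0, 0, 1, 0⟩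

theorem Quaternion.eq_ofComplex_add_ofComplex_mul_qj (x : ℍ) :
    x = ofComplex ⟨x.re, x.imI⟩ + ofComplex ⟨x.imJ, x.imK⟩ * qj := by
  ext <;> simp only [re_add, imI_add, imJ_add, imK_add, re_mul, imI_mul, imJ_mul, imK_mul] <;>
    simp [qj]

theorem Quaternion.sum_smul_eq_zero_of_complex_parts {s : Finset ℕ} {r : ℕ → ℝ} {q : ℕ → ℍ}
    (h₁ : ∑ m ∈ s, r m • (⟨(q m).re, (q m).imI⟩ : ℂ) = 0)
    (h₂ : ∑ m ∈ s, r m • (⟨(q m).imJ, (q m).imK⟩ : ℂ) = 0) :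
    ∑ m ∈ s, r m • q m = 0 :=
  calc ∑ m ∈ s, r m • q m
      = ∑ m ∈ s, r m • (ofComplex ⟨(q m).re, (q m).imI⟩
          + ofComplex ⟨(q m).imJ, (q m).imK⟩ * qj) :=
        Finset.sum_congr rfl fun m _ => by rw [← eq_ofComplex_add_ofComplex_mul_qj]
    _ = ofComplex (∑ m ∈ s, r m • (⟨(q m).re, (q m).imI⟩ : ℂ))
          + ofComplex (∑ m ∈ s, r m • (⟨(q m).imJ, (q m).imK⟩ : ℂ)) * qj := by
        simp only [map_sum, map_smul, smul_add, Finset.sum_add_distrib, Finset.sum_mul,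
          smul_mul_assoc]
    _ = 0 := by rw [h₁, h₂, map_zero, zero_mul, add_zero]

theorem common_root_gives_spherical_zero_general
    (n : ℕ) (q : ℕ → Quaternion ℝ) (η : ℂ)
    (hη : η.im ≠ 0)
    (h1 : f1 n q η = 0) (h2 : f2 n q η = 0)
    (h3 : f1 n q ((starRingEnd ℂ) η) = 0) (h4 : f2 n q ((starRingEnd ℂ) η) = 0) :
    ∀ x : Quaternion ℝ, x.re = η.re → ‖x‖ = ‖η‖ →
      ∑ m ∈ Finset.range (n + 1), q m * x ^ m = 0 := by
  intro x hre hnorm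
  have hconj : η ≠ starRingEnd ℂ η := fun h => hη (Complex.conj_eq_iff_im.mp h.symm)
  have hQ := monic_realQuadratic η
  have hdeg := natDegree_realQuadratic η
  unfold f1 at h1 h3
  unfold f2 at h2 h4
  rw [sum_mul_pow_eq_of_aeval_eq_zero hQ hdeg (aeval_self_realQuadratic η)] at h1 h2
  rw [sum_mul_pow_eq_of_aeval_eq_zero hQ hdeg (aeval_conj_realQuadratic η)] at h3 h4
  obtain ⟨ha₁, hb₁⟩ := eq_zero_of_mul_add_eq_zero hconj h1 h3
  obtain ⟨ha₂, hb₂⟩ := eq_zero_of_mul_add_eq_zero hconj h2 h4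
  rw [sum_mul_pow_eq_of_aeval_eq_zero hQ hdeg (aeval_realQuadratic_of_re_eq_of_norm_eq hre hnorm),
    sum_smul_eq_zero_of_complex_parts ha₁ ha₂, sum_smul_eq_zero_of_complex_parts hb₁ hb₂,
    zero_mul, add_zero]

/-- If `η` is a nonreal complex number with `f₁(η) = f₂(η) = 0` and
`f₁(conj η) = f₂(conj η) = 0`, then every quaternion conjugate to `η`
(equivalently, every `x ∈ ℍ` with `x.re = Re η` and `‖x‖ = |η|`) is a zero of `p`;
thus `η` determines a spherical zero of `p`. -/
theorem common_root_gives_spherical_zero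
    (n : ℕ) (q : ℕ → Quaternion ℝ) (h0 : q 0 = 0 ∨ q 0 = 1) (η : ℂ)
    (hη : η.im ≠ 0)
    (h1 : f1 n q η = 0) (h2 : f2 n q η = 0)
    (h3 : f1 n q ((starRingEnd ℂ) η) = 0) (h4 : f2 n q ((starRingEnd ℂ) η) = 0) :
    ∀ x : Quaternion ℝ, x.re = η.re → ‖x‖ = ‖η‖ →
      ∑ m ∈ Finset.range (n + 1), q m * x ^ m = 0 :=
  common_root_gives_spherical_zero_general n q η hη h1 h2 h3 h4
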